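/- arXiv:2504.13464 — 2 statements merged into one kernel-verified Lean document; each statement's English description precedes it below -/
import Mathlib

section
/- Let X be a Banach space and let Y be a proper linear subspace of X. If Y intersects the relative interior of every maximal face of B_X (i.e. for every maximal face F of B_X there exists y ∈ Y ∩ int(F)), then Y is strongly anti-coproximinal in X. -/
/-!
Normalise `x` to a unit vector `u`. By Hahn–Banach `u` lies in a face of `B_X` (the set where a
norming functional equals `1`), and by Zorn's lemma in a maximal face `F`. Pick `y ∈ Y` in the
relative interior of `F`, so that `y = (1 - t) u + t z` with `z ∈ F` and `0 < t < 1`. Then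
`‖y - (1 - t) u‖ = t < 1 - ε (1 - t) = ‖y‖ - ε ‖(1 - t) u‖`, so `y` is not `ε`-orthogonal to `u`,
hence not to `x`.
-/

open Filter Topology Metric NormedSpace

/-- `F` is a face of the closed unit ball `B_X`. -/
def IsFaceOfBall (𝕜 : Type*) {X : Type*} [RCLike 𝕜] [NormedAddCommGroup X]
    [NormedSpace 𝕜 X] (F : Set X) : Prop :=
  (F ⊆ {x | ‖x‖ = 1}) ∧
  (∀ u ∈ F, ∀ v ∈ F, ∀ t : ℝ, 0 ≤ t → t ≤ 1 → ((1 - t : ℝ) : 𝕜) • u + (t : 𝕜) • v ∈ F) ∧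
  (∀ u v : X, ‖u‖ ≤ 1 → ‖v‖ ≤ 1 → (2⁻¹ : 𝕜) • (u + v) ∈ F → u ∈ F ∧ v ∈ F)

/-- `F` is a maximal face of `B_X`. -/
def IsMaximalFaceOfBall (𝕜 : Type*) {X : Type*} [RCLike 𝕜] [NormedAddCommGroup X]
    [NormedSpace 𝕜 X] (F : Set X) : Prop :=
  IsFaceOfBall 𝕜 F ∧ ∀ F' : Set X, IsFaceOfBall 𝕜 F' → F ⊆ F' → F' = F

/-- `x` lies in the relative (algebraic) interior of the face `F`. -/
def MemRelIntFace (𝕜 : Type*) {X : Type*} [RCLike 𝕜] [NormedAddCommGroup X]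
    [NormedSpace 𝕜 X] (F : Set X) (x : X) : Prop :=
  x ∈ F ∧ ∀ w ∈ F, ∃ z ∈ F, ∃ t : ℝ, 0 < t ∧ t < 1 ∧
    x = ((1 - t : ℝ) : 𝕜) • w + (t : 𝕜) • z

/-- `S` is strongly anti-coproximinal. -/
def StronglyAntiCoproximinal (𝕜 : Type*) {X : Type*} [RCLike 𝕜] [NormedAddCommGroup X]
    [NormedSpace 𝕜 X] (S : Set X) : Prop :=
  ∀ x : X, x ≠ 0 → ∀ ε : ℝ, 0 ≤ ε → ε < 1 →
    ∃ y ∈ S, ¬ ∀ lam : 𝕜, ‖y‖ - ε * ‖lam • x‖ ≤ ‖y + lam • x‖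

theorem RCLike.eq_one_of_norm_le_one_of_add_eq_two {K : Type*} [RCLike K] {a b : K}
    (ha : ‖a‖ ≤ 1) (hb : ‖b‖ ≤ 1) (hab : a + b = 2) : a = 1 := by
  have hre : re a + re b = 2 := by simpa using congrArg re hab
  have hre_a : re a = 1 := by linarith [re_le_norm a, re_le_norm b]
  rw [← re_eq_self_of_le (a := a) (by linarith), hre_a, ofReal_one]

section Faces

variable {𝕜 X : Type*} [RCLike 𝕜] [NormedAddCommGroup X] [NormedSpace 𝕜 X]

def normingFace (g : StrongDual 𝕜 X) : Set X :=
  {v | ‖v‖ ≤ 1 ∧ g v = 1}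

theorem norm_convexCombo_le_one {u v : X} (hu : ‖u‖ ≤ 1) (hv : ‖v‖ ≤ 1) {t : ℝ}
    (ht₀ : 0 ≤ t) (ht₁ : t ≤ 1) : ‖((1 - t : ℝ) : 𝕜) • u + (t : 𝕜) • v‖ ≤ 1 :=
  calc ‖((1 - t : ℝ) : 𝕜) • u + (t : 𝕜) • v‖
      ≤ ‖((1 - t : ℝ) : 𝕜) • u‖ + ‖(t : 𝕜) • v‖ := norm_add_le _ _
    _ = (1 - t) * ‖u‖ + t * ‖v‖ := by
        rw [norm_smul, norm_smul, RCLike.norm_ofReal, RCLike.norm_ofReal,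
          abs_of_nonneg (sub_nonneg.2 ht₁), abs_of_nonneg ht₀]
    _ ≤ (1 - t) * 1 + t * 1 := by gcongr
    _ = 1 := by ring

theorem isFaceOfBall_normingFace {g : StrongDual 𝕜 X} (hg : ‖g‖ ≤ 1) :
    IsFaceOfBall 𝕜 (normingFace g) := by
  have hg_le {v : X} (hv : ‖v‖ ≤ 1) : ‖g v‖ ≤ 1 :=
    (g.le_opNorm v).trans (mul_le_one₀ hg (norm_nonneg v) hv)
  refine ⟨?sphere, ?convex, ?extreme⟩
  case sphere =>
    rintro v ⟨hv, hgv⟩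
    refine le_antisymm hv ?_
    simpa [hgv] using (g.le_opNorm v).trans (mul_le_of_le_one_left (norm_nonneg v) hg)
  case convex =>
    rintro u ⟨hu, hgu⟩ v ⟨hv, hgv⟩ t ht₀ ht₁
    refine ⟨norm_convexCombo_le_one hu hv ht₀ ht₁, ?_⟩
    simp only [map_add, map_smul, hgu, hgv, smul_eq_mul, mul_one]
    push_cast
    ring
  case extreme =>
    rintro u v hu hv ⟨-, hmid⟩
    have hsum : g u + g v = 2 := by
      rw [map_smul, map_add, smul_eq_mul] at hmid
      linear_combination 2 * hmid
    exact ⟨⟨hu, RCLike.eq_one_of_norm_le_one_of_add_eq_two (hg_le hu) (hg_le hv) hsum⟩,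
      ⟨hv, RCLike.eq_one_of_norm_le_one_of_add_eq_two (hg_le hv) (hg_le hu)
        (by rwa [add_comm])⟩⟩

theorem exists_isFaceOfBall_mem {u : X} (hu : ‖u‖ = 1) :
    ∃ F : Set X, IsFaceOfBall 𝕜 F ∧ u ∈ F := by
  obtain ⟨g, hg, hgu⟩ := exists_dual_vector'' 𝕜 u
  exact ⟨normingFace g, isFaceOfBall_normingFace hg, hu.le, by simp [hgu, hu]⟩

theorem isFaceOfBall_sUnion {c : Set (Set X)} (hc : ∀ F ∈ c, IsFaceOfBall 𝕜 F)
    (hchain : IsChain (· ⊆ ·) c) : IsFaceOfBall 𝕜 (⋃₀ c) := by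
  refine ⟨?sphere, ?convex, ?extreme⟩
  case sphere =>
    rintro v ⟨F, hF, hvF⟩
    exact (hc F hF).1 hvF
  case convex =>
    rintro u ⟨Fu, hFu, huF⟩ v ⟨Fv, hFv, hvF⟩ t ht₀ ht₁
    rcases hchain.total hFu hFv with huv | hvu
    · exact ⟨Fv, hFv, (hc Fv hFv).2.1 u (huv huF) v hvF t ht₀ ht₁⟩
    · exact ⟨Fu, hFu, (hc Fu hFu).2.1 u huF v (hvu hvF) t ht₀ ht₁⟩
  case extreme =>
    rintro u v hu hv ⟨F, hF, hmid⟩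
    obtain ⟨huF, hvF⟩ := (hc F hF).2.2 u v hu hv hmid
    exact ⟨⟨F, hF, huF⟩, ⟨F, hF, hvF⟩⟩

theorem IsFaceOfBall.exists_isMaximalFaceOfBall_superset {F : Set X} (hF : IsFaceOfBall 𝕜 F) :
    ∃ M : Set X, IsMaximalFaceOfBall 𝕜 M ∧ F ⊆ M := by
  obtain ⟨M, hFM, hM⟩ := zorn_subset_nonempty {F : Set X | IsFaceOfBall 𝕜 F}
    (fun c hc hchain _ => ⟨⋃₀ c, isFaceOfBall_sUnion hc hchain,
      fun _ => Set.subset_sUnion_of_mem⟩) F hF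
  exact ⟨M, ⟨hM.1, fun F' hF' hMF' => (hM.2 hF' hMF').antisymm hMF'⟩, hFM⟩

theorem exists_isMaximalFaceOfBall_mem {u : X} (hu : ‖u‖ = 1) :
    ∃ M : Set X, IsMaximalFaceOfBall 𝕜 M ∧ u ∈ M := by
  obtain ⟨F, hF, huF⟩ := exists_isFaceOfBall_mem (𝕜 := 𝕜) hu
  obtain ⟨M, hM, hFM⟩ := hF.exists_isMaximalFaceOfBall_superset
  exact ⟨M, hM, hFM huF⟩

end Faces

section BirkhoffJames

variable {𝕜 X : Type*} [RCLike 𝕜] [NormedAddCommGroup X] [NormedSpace 𝕜 X]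

variable (𝕜) in
/-- `y ⊥_B^ε x`. -/
def BirkhoffJamesOrthogonal (ε : ℝ) (y x : X) : Prop :=
  ∀ lam : 𝕜, ‖y‖ - ε * ‖lam • x‖ ≤ ‖y + lam • x‖

theorem BirkhoffJamesOrthogonal.smul_right {ε : ℝ} {y x : X}
    (h : BirkhoffJamesOrthogonal 𝕜 ε y x) (c : 𝕜) : BirkhoffJamesOrthogonal 𝕜 ε y (c • x) := by
  intro lam
  simpa only [smul_smul] using h (lam * c)

theorem not_birkhoffJamesOrthogonal_of_eq_convexCombo {ε t : ℝ} {y u z : X}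
    (hy : ‖y‖ = 1) (hu : ‖u‖ = 1) (hz : ‖z‖ ≤ 1) (ht₀ : 0 ≤ t) (ht₁ : t < 1) (hε : ε < 1)
    (hyuz : y = ((1 - t : ℝ) : 𝕜) • u + (t : 𝕜) • z) :
    ¬ BirkhoffJamesOrthogonal 𝕜 ε y u := by
  intro h
  have hmove : y + (-((1 - t : ℝ) : 𝕜)) • u = (t : 𝕜) • z := by
    rw [hyuz]
    module
  have hstep := h (-((1 - t : ℝ) : 𝕜))
  rw [hmove, norm_smul, norm_smul, norm_neg, RCLike.norm_ofReal, RCLike.norm_ofReal,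
    abs_of_nonneg ht₀, abs_of_nonneg (sub_nonneg.2 ht₁.le), hy, hu, mul_one] at hstep
  nlinarith [mul_le_of_le_one_right ht₀ hz]

end BirkhoffJames

theorem stronglyAntiCoproximinal_of_meets_relInt_of_maximal_faces_general
    {𝕜 X : Type*} [RCLike 𝕜] [NormedAddCommGroup X] [NormedSpace 𝕜 X]
    (Y : Submodule 𝕜 X)
    (h : ∀ F : Set X, IsMaximalFaceOfBall 𝕜 F → ∃ y ∈ Y, MemRelIntFace 𝕜 F y) :
    StronglyAntiCoproximinal 𝕜 (Y : Set X) := by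
  intro x hx ε _ hε
  set u : X := (‖x‖ : 𝕜)⁻¹ • x
  have hu : ‖u‖ = 1 := norm_smul_inv_norm hx
  obtain ⟨F, hF, huF⟩ := exists_isMaximalFaceOfBall_mem (𝕜 := 𝕜) hu
  obtain ⟨y, hyY, hyF, hint⟩ := h F hF
  obtain ⟨z, hzF, t, ht₀, ht₁, hyuz⟩ := hint u huF
  have hsphere := hF.1.1
  exact ⟨y, hyY, fun hyx => not_birkhoffJamesOrthogonal_of_eq_convexCombo (hsphere hyF) hu
    (hsphere hzF).le ht₀.le ht₁ hε hyuz (BirkhoffJamesOrthogonal.smul_right hyx _)⟩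

/-- If a proper subspace `Y` of a Banach space `X` intersects the relative
interior of every maximal face of `B_X`, then `Y` is strongly anti-coproximinal in `X`. -/
theorem stronglyAntiCoproximinal_of_meets_relInt_of_maximal_faces
    {𝕜 X : Type*} [RCLike 𝕜] [NormedAddCommGroup X] [NormedSpace 𝕜 X] [CompleteSpace X]
    (Y : Submodule 𝕜 X) (hYp : Y ≠ ⊤)
    (h : ∀ F : Set X, IsMaximalFaceOfBall 𝕜 F → ∃ y ∈ Y, MemRelIntFace 𝕜 F y) :
    StronglyAntiCoproximinal 𝕜 (Y : Set X) :=
  stronglyAntiCoproximinal_of_meets_relInt_of_maximal_faces_general Y h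
end

section
/- Let Y be a linear subspace of c₀ (the space of 𝕂-valued sequences converging to 0, with the supremum norm). The following are equivalent: (i) Y is strongly anti-coproximinal in c₀; (ii) Y is anti-coproximinal in c₀; (iii) for every r ∈ ℕ there exists y = (y₁, y₂, …) ∈ Y such that |y_r| > |y_n| for all n ∈ ℕ with n ≠ r. -/
/-!
(ii) ⇒ (iii): if no `y ∈ Y` peaks strictly at `r`, then every `y ∈ Y` is Birkhoff–James
orthogonal to the unit vector `e_r`, because changing the `r`-th coordinate cannot lower a
supremum that is also attained off `r`.

(iii) ⇒ (i): given `x ≠ 0`, take `r` with `|x_r| = ‖x‖` and `y ∈ Y` peaking strictly at `r`.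
Since `y` vanishes at infinity, its values off `r` stay below some `M < |y_r|`. Replacing `y` by
`y - t (y_r / x_r) x` lowers the peak to `(1 - t)|y_r|` and raises the other coordinates to at
most `M + t|y_r|`, so for small `t > 0` the norm drops below `‖y‖ - ε t |y_r|`.
-/

open Filter Topology Metric

open scoped ZeroAtInfty

def AntiCoproximinal (𝕜 : Type*) {X : Type*} [RCLike 𝕜] [NormedAddCommGroup X]
    [NormedSpace 𝕜 X] (S : Set X) : Prop :=
  ∀ x : X, x ≠ 0 → ∃ y ∈ S, ¬ ∀ lam : 𝕜, ‖y‖ ≤ ‖y + lam • x‖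

theorem StronglyAntiCoproximinal.antiCoproximinal {𝕜 X : Type*} [RCLike 𝕜]
    [NormedAddCommGroup X] [NormedSpace 𝕜 X] {S : Set X}
    (hS : StronglyAntiCoproximinal 𝕜 S) : AntiCoproximinal 𝕜 S := by
  intro x hx
  obtain ⟨y, hyS, hy⟩ := hS x hx 0 le_rfl one_pos
  exact ⟨y, hyS, fun h => hy fun lam => by simpa using h lam⟩

namespace ZeroAtInftyContinuousMap

section Norm

variable {α E : Type*} [TopologicalSpace α] [NormedAddCommGroup E]

theorem norm_apply_le (f : C₀(α, E)) (x : α) : ‖f x‖ ≤ ‖f‖ := by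
  rw [← norm_toBCF_eq_norm]
  exact f.toBCF.norm_coe_le_norm x

theorem norm_le_of_forall_norm_apply_le {f : C₀(α, E)} {C : ℝ} (hC : 0 ≤ C)
    (h : ∀ x, ‖f x‖ ≤ C) : ‖f‖ ≤ C := by
  rw [← norm_toBCF_eq_norm]
  exact (BoundedContinuousFunction.norm_le hC).2 h

theorem exists_forall_norm_apply_le [Nonempty α] (f : C₀(α, E)) :
    ∃ r, ∀ x, ‖f x‖ ≤ ‖f r‖ := by
  by_cases hf : ∀ x, f x = 0
  · exact ⟨Classical.arbitrary α, fun x => by simp [hf]⟩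
  push Not at hf
  obtain ⟨x₀, hx₀⟩ := hf
  have hlim : Tendsto (fun x => ‖f x‖) (cocompact α) (𝓝 0) := by
    simpa using (zero_at_infty f).norm
  exact (map_continuous f).norm.exists_forall_ge' x₀
    (hlim.eventually (ge_mem_nhds (norm_pos_iff.2 hx₀)))

theorem norm_le_norm_add_of_forall_ne_apply_eq_zero {y z : C₀(α, E)} {r n : α} (hn : n ≠ r)
    (hyn : ‖y r‖ ≤ ‖y n‖) (hz : ∀ m ≠ r, z m = 0) : ‖y‖ ≤ ‖y + z‖ := by
  have hyz : ∀ m ≠ r, (y + z) m = y m := fun m hm => by simp [hz m hm]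
  refine norm_le_of_forall_norm_apply_le (norm_nonneg _) fun m => ?_
  rcases eq_or_ne m r with rfl | hm
  · calc ‖y m‖ ≤ ‖y n‖ := hyn
      _ = ‖(y + z) n‖ := by rw [hyz n hn]
      _ ≤ ‖y + z‖ := norm_apply_le _ n
  · rw [← hyz m hm]
    exact norm_apply_le _ m

end Norm

section Single

variable {α β : Type*} [TopologicalSpace α] [DiscreteTopology α] [DecidableEq α]
  [TopologicalSpace β] [Zero β]

def single (r : α) (v : β) : C₀(α, β) where
  toFun x := if x = r then v else 0
  continuous_toFun := continuous_of_discreteTopology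
  zero_at_infty' := by
    rw [cocompact_eq_cofinite]
    exact tendsto_const_nhds.congr' <|
      (eventually_cofinite_ne r).mono fun x hx => (if_neg hx).symm

@[simp]
theorem single_apply_self (r : α) (v : β) : single r v r = v :=
  if_pos rfl

theorem single_apply_of_ne {r x : α} (hx : x ≠ r) (v : β) : single r v x = 0 :=
  if_neg hx

end Single

section Peak

variable {α : Type*} [TopologicalSpace α]

theorem exists_forall_ne_norm_apply_le_lt {E : Type*} [NormedAddCommGroup E]
    [DiscreteTopology α] [Nontrivial α] {y : C₀(α, E)} {r : α}
    (hy : ∀ x ≠ r, ‖y x‖ < ‖y r‖) :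
    ∃ M, 0 ≤ M ∧ M < ‖y r‖ ∧ ∀ x ≠ r, ‖y x‖ ≤ M := by
  classical
  set z := y - single r (y r)
  have hz : ∀ x ≠ r, z x = y x := fun x hx => by simp [z, single_apply_of_ne hx]
  obtain ⟨m, hm⟩ := z.exists_forall_norm_apply_le
  refine ⟨‖z m‖, norm_nonneg _, ?_, fun x hx => hz x hx ▸ hm x⟩
  rcases eq_or_ne m r with rfl | hmr
  · obtain ⟨x, hx⟩ := exists_ne m
    simpa [z] using (norm_nonneg _).trans_lt (hy x hx)
  · exact hz m hmr ▸ hy m hmr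

variable {𝕜 : Type*} [RCLike 𝕜]

theorem norm_smul_le_of_forall_norm_apply_le {x : C₀(α, 𝕜)} {r : α}
    (hx : ∀ n, ‖x n‖ ≤ ‖x r‖) (c : 𝕜) {t : ℝ} (ht : 0 ≤ t) :
    ‖((t : 𝕜) * (c / x r)) • x‖ ≤ t * ‖c‖ := by
  have hxle : ‖x‖ ≤ ‖x r‖ := norm_le_of_forall_norm_apply_le (norm_nonneg _) hx
  rw [norm_smul, norm_mul, RCLike.norm_ofReal, abs_of_nonneg ht, norm_div, mul_assoc]
  gcongr t * ?_
  calc ‖c‖ / ‖x r‖ * ‖x‖ ≤ ‖c‖ / ‖x r‖ * ‖x r‖ := by gcongr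
    _ ≤ ‖c‖ := by
      rcases eq_or_ne ‖x r‖ 0 with h | h
      · simp [h]
      · rw [div_mul_cancel₀ _ h]

theorem norm_sub_smul_le {x y : C₀(α, 𝕜)} {r : α} {M t : ℝ}
    (hx : ∀ n, ‖x n‖ ≤ ‖x r‖) (hxr : x r ≠ 0) (hM : ∀ n ≠ r, ‖y n‖ ≤ M)
    (ht₀ : 0 ≤ t) (ht₁ : t ≤ 1) :
    ‖y - ((t : 𝕜) * (y r / x r)) • x‖ ≤ max ((1 - t) * ‖y r‖) (M + t * ‖y r‖) := by
  set c : 𝕜 := (t : 𝕜) * (y r / x r)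
  have hcx : ‖c • x‖ ≤ t * ‖y r‖ := norm_smul_le_of_forall_norm_apply_le hx (y r) ht₀
  refine norm_le_of_forall_norm_apply_le (le_max_of_le_left (by nlinarith [norm_nonneg (y r)]))
    fun n => ?_
  rcases eq_or_ne n r with rfl | hn
  · have hyn : (y - c • x) n = ((1 - t : ℝ) : 𝕜) * y n := by
      simp only [sub_apply, smul_apply, smul_eq_mul, c]
      field_simp
      push_cast
      ring
    rw [hyn, norm_mul, RCLike.norm_ofReal, abs_of_nonneg (sub_nonneg.2 ht₁)]
    exact le_max_left _ _
  · calc ‖(y - c • x) n‖ ≤ ‖y n‖ + ‖(c • x) n‖ := norm_sub_le _ _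
      _ ≤ M + t * ‖y r‖ := add_le_add (hM n hn) ((norm_apply_le _ n).trans hcx)
      _ ≤ _ := le_max_right _ _

end Peak

end ZeroAtInftyContinuousMap

open ZeroAtInftyContinuousMap

theorem AntiCoproximinal.exists_forall_ne_norm_apply_lt {𝕜 α E : Type*} [RCLike 𝕜]
    [TopologicalSpace α] [DiscreteTopology α] [NormedAddCommGroup E] [NormedSpace 𝕜 E]
    [Nontrivial E] {S : Set C₀(α, E)} (hS : AntiCoproximinal 𝕜 S) (r : α) :
    ∃ y ∈ S, ∀ n ≠ r, ‖y n‖ < ‖y r‖ := by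
  classical
  obtain ⟨v, hv⟩ := exists_ne (0 : E)
  have hsingle : single r v ≠ 0 := fun h => hv (by simpa using congr($h r))
  obtain ⟨y, hyS, hy⟩ := hS _ hsingle
  refine ⟨y, hyS, fun n hn => ?_⟩
  by_contra! hyn
  exact hy fun lam => norm_le_norm_add_of_forall_ne_apply_eq_zero hn hyn
    fun m hm => by simp [single_apply_of_ne hm]

theorem stronglyAntiCoproximinal_of_forall_exists_norm_apply_lt {𝕜 α : Type*} [RCLike 𝕜]
    [TopologicalSpace α] [DiscreteTopology α] [Nontrivial α] {S : Set C₀(α, 𝕜)}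
    (hS : ∀ r, ∃ y ∈ S, ∀ n ≠ r, ‖y n‖ < ‖y r‖) : StronglyAntiCoproximinal 𝕜 S := by
  intro x hx ε hε₀ hε₁
  obtain ⟨r, hxmax⟩ := x.exists_forall_norm_apply_le
  have hxr : x r ≠ 0 := fun h => hx <| ext fun n => by simpa [h] using hxmax n
  obtain ⟨y, hyS, hy⟩ := hS r
  obtain ⟨M, hM₀, hMy, hM⟩ := exists_forall_ne_norm_apply_le_lt hy
  set a := ‖y r‖
  have ha : 0 < a := hM₀.trans_lt hMy
  set t := (a - M) / (2 * a * (1 + ε))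
  have ht₀ : 0 < t := div_pos (sub_pos.2 hMy) (by positivity)
  have hta : t * a * (1 + ε) = (a - M) / 2 := by
    simp only [t]
    field_simp
  have ht₁ : t ≤ 1 := by
    by_contra! ht
    nlinarith [mul_lt_mul_of_pos_right ht (mul_pos ha (by linarith : 0 < 1 + ε))]
  refine ⟨y, hyS, fun h => ?_⟩
  have hlam := h (-((t : 𝕜) * (y r / x r)))
  rw [neg_smul, norm_neg, ← sub_eq_add_neg] at hlam
  have hsub := norm_sub_smul_le hxmax hxr hM ht₀.le ht₁
  have hsmul := mul_le_mul_of_nonneg_left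
    (norm_smul_le_of_forall_norm_apply_le hxmax (y r) ht₀.le) hε₀
  have hεt : ε * (t * a) < t * a := mul_lt_of_lt_one_left (mul_pos ht₀ ha) hε₁
  have hmax : max ((1 - t) * a) (M + t * a) < a - ε * (t * a) :=
    max_lt (by linarith) (by linarith)
  linarith [norm_apply_le y r]

/-- For a subspace `Y` of `c₀` (𝕜-valued sequences vanishing at infinity,
sup norm), the following are equivalent: (i) `Y` is strongly anti-coproximinal;
(ii) `Y` is anti-coproximinal; (iii) for every `r ∈ ℕ` there is `y ∈ Y` with
`|y_r| > |y_n|` for all `n ≠ r`. -/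
theorem antiCoproximinal_c0_iff
    {𝕜 : Type*} [RCLike 𝕜] (Y : Submodule 𝕜 (ZeroAtInftyContinuousMap ℕ 𝕜)) :
    (StronglyAntiCoproximinal 𝕜 (Y : Set (ZeroAtInftyContinuousMap ℕ 𝕜)) ↔
      AntiCoproximinal 𝕜 (Y : Set (ZeroAtInftyContinuousMap ℕ 𝕜))) ∧
    (AntiCoproximinal 𝕜 (Y : Set (ZeroAtInftyContinuousMap ℕ 𝕜)) ↔
      ∀ r : ℕ, ∃ y ∈ Y, ∀ n : ℕ, n ≠ r → ‖y n‖ < ‖y r‖) := by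
  refine ⟨⟨StronglyAntiCoproximinal.antiCoproximinal, fun h => ?_⟩,
    ⟨fun h => h.exists_forall_ne_norm_apply_lt, fun h => ?_⟩⟩
  · exact stronglyAntiCoproximinal_of_forall_exists_norm_apply_lt
      h.exists_forall_ne_norm_apply_lt
  · exact (stronglyAntiCoproximinal_of_forall_exists_norm_apply_lt h).antiCoproximinal
end
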